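/- In a 1-writer program, if two outer blocks b_r and b_w of different threads are in conflict via variable x — i.e., the last write to x in b_w is w(x,d′) and b_r contains a read r(x,d) with d ≠ d′ — then in every sequentially consistent interleaving in which each block appears contiguously and outer blocks are the last blocks of their threads, all events of b_r on that read occur before the last write to x in b_w; in particular b_r's conflicting read precedes b_w's last write to x. -/

import Mathlib

/-- Memory events: reads and writes of natural-number values to variables of type `V`. -/
inductive Event (V : Type) where
  | read  (x : V) (d : ℕ)
  | write (x : V) (d : ℕ)
deriving DecidableEq

variable {V ι : Type}

/-- A sequence of events is sequentially consistent (SC): every read `r(x,d)` has a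
preceding write `w(x,d)` with no write of a different value to `x` in between. -/
def SC (σ : List (Event V)) : Prop :=
  ∀ p x d, σ[(p : ℕ)]? = some (Event.read x d) →
    ∃ q, q < p ∧ σ[q]? = some (Event.write x d) ∧
      ∀ r, q < r → r < p → ∀ d', d' ≠ d → σ[r]? ≠ some (Event.write x d')

/-- `σ` is an interleaving of the given threads: its restriction to each
thread identifier equals that thread's event sequence. -/
def IsInterleaving [DecidableEq ι] (threads : ι → List (Event V)) (σ : List (ι × Event V)) : Prop :=
  ∀ i, σ.filterMap (fun a => if a.1 = i then some a.2 else none) = threads i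

/-- A preemption occurs at position `j`: the events at `j` and `j+1` are from
different threads and the event at `j` is not the last event of its thread. -/
def PreemptionAt (σ : List (ι × Event V)) (j : ℕ) : Prop :=
  ∃ a b, σ[j]? = some a ∧ σ[j + 1]? = some b ∧ a.1 ≠ b.1 ∧
    ∃ r c, j < r ∧ σ[r]? = some c ∧ c.1 = a.1

open Classical in
/-- The number of preemption positions of `σ`. -/
noncomputable def numPreemptions (σ : List (ι × Event V)) : ℕ :=
  ((Finset.range σ.length).filter fun j => PreemptionAt σ j).card

open Classical in
/-- The number of context switches of `σ` (adjacent events of different threads). -/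
noncomputable def numSwitches (σ : List (ι × Event V)) : ℕ :=
  ((Finset.range σ.length).filter fun j =>
    ∃ a b, σ[j]? = some a ∧ σ[j + 1]? = some b ∧ a.1 ≠ b.1).card

/-- The (increasing) list of positions of `σ` carrying events of thread `i`. -/
def threadPositions [DecidableEq ι] (σ : List (ι × Event V)) (i : ι) : List ℕ :=
  (List.range σ.length).filter fun p => decide ((σ[p]?).map Prod.fst = some i)

/-- The position in `σ` of the `j`-th event of thread `i`. -/
def posOf [DecidableEq ι] (σ : List (ι × Event V)) (i : ι) (j : ℕ) : ℕ :=
  (threadPositions σ i).getD j 0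

/-- All events of thread `t` occur before all events of thread `t'` in `σ`. -/
def ThreadBefore [DecidableEq ι] (σ : List (ι × Event V)) (t t' : ι) : Prop :=
  ∀ p ∈ threadPositions σ t, ∀ q ∈ threadPositions σ t', p < q

/-- The event is a write to variable `x`. -/
def writesTo (x : V) : Event V → Prop
  | Event.write y _ => y = x
  | _ => False

/-- A 1-writer program: for each variable, a single thread performs all writes to it. -/
def OneWriter (threads : ι → List (Event V)) : Prop :=
  ∀ x i i', (∃ e ∈ threads i, writesTo x e) → (∃ e ∈ threads i', writesTo x e) → i = i'

/-- The events of thread `i` from its index `s` onwards appear contiguously in `σ`. -/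
def ContiguousFrom [DecidableEq ι] (σ : List (ι × Event V)) (i : ι) (s : ℕ) : Prop :=
  ∀ j, s ≤ j → j + 1 < (threadPositions σ i).length → posOf σ i (j + 1) = posOf σ i j + 1

/-- Conflict-graph edge `tr → tw` between outer blocks (suffixes of the threads
starting at indices `s tr`, `s tw`): the last write to some variable `x` in the
outer block of `tw` conflicts with a read of `x` in the outer block of `tr`. -/
def ConflictEdge [DecidableEq ι] (threads : ι → List (Event V)) (s : ι → ℕ) (tr tw : ι) : Prop :=
  tr ≠ tw ∧ ∃ x d d' jr jw, d ≠ d' ∧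
    s tr ≤ jr ∧ (threads tr)[jr]? = some (Event.read x d) ∧
    s tw ≤ jw ∧ (threads tw)[jw]? = some (Event.write x d') ∧
    ∀ j d'', jw < j → (threads tw)[j]? ≠ some (Event.write x d'')

/-- Splitting a list into contiguous blocks immediately after each position in `cut`. -/
def splitAtCuts {α : Type} (l : List α) (cut : Finset ℕ) : List (List α) :=
  let cs := cut.sort (· ≤ ·)
  ((0 :: cs.map (· + 1)).zip (cs.map (· + 1) ++ [l.length])).map fun p => (l.take p.2).drop p.1

/-!
Suppose the read `r(x,d)` came after the write `w(x,d')`. Sequential consistency makes the read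
see a write `w(x,d)` placed strictly between the two. By the 1-writer property that write belongs
to the writing thread `tw`, and since the positions of a thread's events in `σ` increase with
their index in the thread, it comes after `w(x,d')` in `tw`, contradicting that `w(x,d')` is the
last write to `x` there.
-/

section ThreadProjection

variable [DecidableEq ι]

def threadEvents (σ : List (ι × Event V)) (i : ι) : List (Event V) :=
  σ.filterMap fun a => if a.1 = i then some a.2 else none

theorem threadPositions_cons (a : ι × Event V) (σ : List (ι × Event V)) (i : ι) :
    threadPositions (a :: σ) i =
      (if a.1 = i then [0] else []) ++ (threadPositions σ i).map (· + 1) := by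
  unfold threadPositions
  rw [List.length_cons, List.range_succ_eq_map, List.filter_cons, List.filter_map]
  by_cases h : a.1 = i <;> simp [h, Function.comp_def]

theorem map_getElem?_threadPositions (σ : List (ι × Event V)) (i : ι) :
    (threadPositions σ i).map (σ[·]?) = (threadEvents σ i).map fun e => some (i, e) := by
  induction σ with
  | nil => rfl
  | cons a σ ih =>
    obtain ⟨t, e⟩ := a
    rw [threadPositions_cons]
    by_cases h : t = i
    · subst h
      simpa [threadEvents, Function.comp_def] using ih
    · simpa [threadEvents, h, Function.comp_def] using ih

theorem length_threadPositions (σ : List (ι × Event V)) (i : ι) :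
    (threadPositions σ i).length = (threadEvents σ i).length := by
  simpa using congrArg List.length (map_getElem?_threadPositions σ i)

theorem threadPositions_sortedLT (σ : List (ι × Event V)) (i : ι) :
    (threadPositions σ i).SortedLT :=
  (List.pairwise_lt_range.sublist List.filter_sublist).sortedLT

theorem mem_threadPositions {σ : List (ι × Event V)} {q : ℕ} {a : ι × Event V}
    (h : σ[q]? = some a) : q ∈ threadPositions σ a.1 := by
  obtain ⟨hq, rfl⟩ := List.getElem?_eq_some_iff.1 h
  simp [threadPositions, hq]

theorem posOf_eq_getElem {σ : List (ι × Event V)} {i : ι} {j : ℕ}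
    (hj : j < (threadPositions σ i).length) : posOf σ i j = (threadPositions σ i)[j] :=
  List.getD_eq_getElem _ _ hj

end ThreadProjection

namespace IsInterleaving

variable [DecidableEq ι] {threads : ι → List (Event V)} {σ : List (ι × Event V)}

theorem threadEvents_eq (hσ : IsInterleaving threads σ) (i : ι) : threadEvents σ i = threads i :=
  hσ i

theorem length_threadPositions (hσ : IsInterleaving threads σ) (i : ι) :
    (threadPositions σ i).length = (threads i).length := by
  rw [_root_.length_threadPositions, hσ.threadEvents_eq]

theorem getElem?_posOf (hσ : IsInterleaving threads σ) {i : ι} {j : ℕ} {e : Event V}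
    (h : (threads i)[j]? = some e) : σ[posOf σ i j]? = some (i, e) := by
  have hj : j < (threadPositions σ i).length := by
    rw [hσ.length_threadPositions]
    exact (List.getElem?_eq_some_iff.1 h).1
  have := congrArg (·[j]?) (map_getElem?_threadPositions σ i)
  simp only [hσ.threadEvents_eq, List.getElem?_map, List.getElem?_eq_getElem hj, h,
    Option.map_some, Option.some_inj] at this
  rwa [posOf_eq_getElem hj]

theorem exists_posOf_eq (hσ : IsInterleaving threads σ) {q : ℕ} {e : Event V}
    (h : (σ.map Prod.snd)[q]? = some e) : ∃ t j, (threads t)[j]? = some e ∧ posOf σ t j = q := by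
  obtain ⟨a, ha, rfl⟩ := Option.map_eq_some_iff.1 (List.getElem?_map ▸ h)
  obtain ⟨j, hj⟩ := List.getElem?_of_mem (mem_threadPositions ha)
  have := congrArg (·[j]?) (map_getElem?_threadPositions σ a.1)
  simp only [List.getElem?_map, hj, ha, Option.map_some] at this
  obtain ⟨e', he', hae'⟩ := Option.map_eq_some_iff.1 this.symm
  refine ⟨a.1, j, ?_, ?_⟩
  · rw [← hσ.threadEvents_eq, he', ← Option.some_inj.1 hae']
  · rw [posOf, List.getD_eq_getElem?_getD, hj, Option.getD_some]

theorem posOf_lt_posOf_iff (hσ : IsInterleaving threads σ) {i : ι} {j j' : ℕ}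
    (hj : j < (threads i).length) (hj' : j' < (threads i).length) :
    posOf σ i j < posOf σ i j' ↔ j < j' := by
  rw [← hσ.length_threadPositions] at hj hj'
  rw [posOf_eq_getElem hj, posOf_eq_getElem hj']
  exact (threadPositions_sortedLT σ i).getElem_lt_getElem_iff

end IsInterleaving

theorem SC.exists_write_between {l : List (Event V)} (hsc : SC l) {x : V} {d d' : ℕ} {p p' : ℕ}
    (hr : l[p]? = some (Event.read x d)) (hw : l[p']? = some (Event.write x d'))
    (hd : d ≠ d') (hlt : p' < p) : ∃ q, p' < q ∧ q < p ∧ l[q]? = some (Event.write x d) := by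
  obtain ⟨q, hqp, hq, hbetween⟩ := hsc p x d hr
  refine ⟨q, ?_, hqp, hq⟩
  rcases lt_trichotomy q p' with h | rfl | h
  · exact absurd hw (hbetween p' h hlt d' hd.symm)
  · simp [hw, hd.symm] at hq
  · exact h

theorem stmt4_general {V : Type} (k : ℕ) (threads : Fin k → List (Event V))
    (hw : OneWriter threads)
    (tr tw : Fin k)
    (x : V) (d d' : ℕ) (jr jw : ℕ) (hd : d ≠ d')
    (hread : (threads tr)[jr]? = some (Event.read x d))
    (hwrite : (threads tw)[jw]? = some (Event.write x d'))
    (hlast : ∀ j d'', jw < j → (threads tw)[j]? ≠ some (Event.write x d''))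
    (σ : List (Fin k × Event V))
    (hσ : IsInterleaving threads σ)
    (hsc : SC (σ.map Prod.snd)) :
    posOf σ tr jr < posOf σ tw jw := by
  have hrpos := hσ.getElem?_posOf hread
  have hwpos := hσ.getElem?_posOf hwrite
  by_contra! hle
  have hlt : posOf σ tw jw < posOf σ tr jr := hle.lt_of_ne fun h => by simp [h, hrpos] at hwpos
  obtain ⟨q, hafter, -, hq⟩ :=
    hsc.exists_write_between (x := x) (by simp [hrpos]) (by simp [hwpos]) hd hlt
  obtain ⟨t, j, hj, rfl⟩ := hσ.exists_posOf_eq hq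
  obtain rfl : t = tw :=
    hw x t tw ⟨_, List.mem_of_getElem? hj, rfl⟩ ⟨_, List.mem_of_getElem? hwrite, rfl⟩
  have hjw : jw < j := (hσ.posOf_lt_posOf_iff (List.getElem?_eq_some_iff.1 hwrite).1
    (List.getElem?_eq_some_iff.1 hj).1).1 hafter
  exact hlast j d hjw hj

/-- in a 1-writer program, if outer blocks `b_r` (suffix of thread `tr`
from `sr`) and `b_w` (suffix of thread `tw` from `sw`) conflict via variable `x` —
the last write to `x` in `b_w` is `w(x,d')` and `b_r` contains a read `r(x,d)` with
`d ≠ d'` — then in every SC interleaving in which the blocks appear contiguously, the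
conflicting read of `b_r` occurs before the last write to `x` of `b_w`. -/
theorem stmt4 {V : Type} (k : ℕ) (threads : Fin k → List (Event V))
    (hw : OneWriter threads)
    (tr tw : Fin k) (hne : tr ≠ tw) (sr sw : ℕ)
    (x : V) (d d' : ℕ) (jr jw : ℕ) (hd : d ≠ d')
    (hjr : sr ≤ jr) (hread : (threads tr)[jr]? = some (Event.read x d))
    (hjw : sw ≤ jw) (hwrite : (threads tw)[jw]? = some (Event.write x d'))
    (hlast : ∀ j d'', jw < j → (threads tw)[j]? ≠ some (Event.write x d''))
    (σ : List (Fin k × Event V))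
    (hσ : IsInterleaving threads σ)
    (hsc : SC (σ.map Prod.snd))
    (hcr : ContiguousFrom σ tr sr) (hcw : ContiguousFrom σ tw sw) :
    posOf σ tr jr < posOf σ tw jw :=
  stmt4_general k threads hw tr tw x d d' jr jw hd hread hwrite hlast σ hσ hsc
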